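/- arXiv:2512.17957 — 3 statements merged into one kernel-verified Lean document; each statement's English description precedes it below -/
import Mathlib

section
/- For any integers t, e with 2 ≤ t ≤ e − 1, there exists an almost symmetric numerical semigroup S with maximal reduced type such that t(S) = t and e(S) = e. (Explicitly, S = Δ(e+1) \ {2(e+1) − t} works.) -/
/-- A numerical semigroup: a subset of ℕ containing 0, closed under addition,
with finite complement. -/
noncomputable def IsNumericalSemigroup (S : Set ℕ) : Prop :=
  0 ∈ S ∧ (∀ a ∈ S, ∀ b ∈ S, a + b ∈ S) ∧ Sᶜ.Finite

/-- The half-line Δ(m) = {0} ∪ {x : m ≤ x}. -/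
noncomputable def Delta (m : ℕ) : Set ℕ := {0} ∪ {x | m ≤ x}

/-- Multiplicity: least nonzero element. -/
noncomputable def mult (S : Set ℕ) : ℕ := sInf {s ∈ S | s ≠ 0}

/-- Frobenius number: largest gap. -/
noncomputable def frob (S : Set ℕ) : ℕ := sSup Sᶜ

/-- Genus: number of gaps. -/
noncomputable def genus (S : Set ℕ) : ℕ := Sᶜ.ncard

/-- The image of S in ℤ. -/
noncomputable def ZS (S : Set ℕ) : Set ℤ := (fun n : ℕ => (n : ℤ)) '' S

/-- Pseudo-Frobenius numbers (as integers). -/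
noncomputable def PF (S : Set ℕ) : Set ℤ :=
  {x | x ∉ ZS S ∧ ∀ s ∈ S, s ≠ 0 → x + (s : ℤ) ∈ ZS S}

/-- Reduced pseudo-Frobenius set. -/
noncomputable def rPF (S : Set ℕ) : Set ℤ :=
  {x | x ∉ ZS S ∧ (frob S : ℤ) - (mult S : ℤ) + 1 ≤ x ∧ x ≤ (frob S : ℤ)}

/-- Type t(S). -/
noncomputable def typ (S : Set ℕ) : ℕ := (PF S).ncard

/-- Reduced type s(S). -/
noncomputable def redtyp (S : Set ℕ) : ℕ := (rPF S).ncard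

/-- Apéry set of n in S. -/
noncomputable def Ap (S : Set ℕ) (n : ℕ) : Set ℕ := {s ∈ S | ∀ u : ℕ, s = u + n → u ∉ S}

/-- Minimal system of generators. -/
noncomputable def msg (S : Set ℕ) : Set ℕ :=
  (S \ {0}) \ {x | ∃ a ∈ S \ {0}, ∃ b ∈ S \ {0}, x = a + b}

/-- Embedding dimension. -/
noncomputable def embdim (S : Set ℕ) : ℕ := (msg S).ncard

/-- Second smallest minimal generator. -/
noncomputable def secondGen (S : Set ℕ) : ℕ := sInf (msg S \ {mult S})

/-!
Let `0 < m`, `m + 1 < f < 2m` and `S = Δ(m) \ {f}`. Since `f < 2m` is not a sum of two nonzero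
elements, `S` is a numerical semigroup; its gaps are `1, …, m - 1` and `f`, so `g(S) = m`,
`F(S) = f` and `m(S) = m`. A gap `g < m` is pseudo-Frobenius exactly when `f - g` is no longer a
nonzero element of `S`, i.e. when `g > f - m`; hence `PF(S) = (f - m, m) ∪ {f}`, which is also the
set of gaps in `[f - m + 1, f]`. So `t(S) = s(S) = 2m - f` and `2 g(S) = 2m = F(S) + t(S)`. The
minimal generators are `m, …, 2m - 1` except `f` (`m + f = (m + 1) + (f - 1)` is why `f ≠ m + 1`
is needed), so `e(S) = m - 1`. Take `m = e + 1` and `f = 2m - t`.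
-/

lemma natCast_mem_ZS {S : Set ℕ} {n : ℕ} : (n : ℤ) ∈ ZS S ↔ n ∈ S := by
  simp [ZS]

lemma natCast_mem_PF {S : Set ℕ} {n : ℕ} :
    (n : ℤ) ∈ PF S ↔ n ∉ S ∧ ∀ s ∈ S, s ≠ 0 → n + s ∈ S := by
  simp only [PF, Set.mem_ofPred_eq, natCast_mem_ZS, ← Nat.cast_add]

section DeltaSdiffSingleton

variable {m f x : ℕ}

lemma mem_Delta_sdiff_singleton : x ∈ Delta m \ {f} ↔ (x = 0 ∨ m ≤ x) ∧ x ≠ f := by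
  simp [Delta]

lemma compl_Delta_sdiff_singleton (m f : ℕ) : (Delta m \ {f})ᶜ = Set.Ico 1 m ∪ {f} := by
  ext x
  simp only [Set.mem_compl_iff, mem_Delta_sdiff_singleton, Set.mem_union, Set.mem_Ico,
    Set.mem_singleton_iff]
  omega

lemma isNumericalSemigroup_Delta_sdiff_singleton (hmf : m < f) (hf : f < 2 * m) :
    IsNumericalSemigroup (Delta m \ {f}) := by
  refine ⟨mem_Delta_sdiff_singleton.mpr (by omega), fun a ha b hb => ?_, ?_⟩
  · rw [mem_Delta_sdiff_singleton] at ha hb ⊢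
    omega
  · rw [compl_Delta_sdiff_singleton]
    exact (Set.finite_Ico _ _).union (Set.finite_singleton _)

lemma genus_Delta_sdiff_singleton (hm : 0 < m) (hmf : m ≤ f) : genus (Delta m \ {f}) = m := by
  have hdisj : Disjoint (Set.Ico 1 m) {f} := by simp; omega
  rw [genus, compl_Delta_sdiff_singleton, Set.ncard_union_eq hdisj, Set.ncard_singleton,
    Set.ncard_Ico_nat]
  omega

lemma frob_Delta_sdiff_singleton (hmf : m ≤ f) : frob (Delta m \ {f}) = f := by
  refine IsGreatest.csSup_eq ⟨by simp [compl_Delta_sdiff_singleton], fun y hy => ?_⟩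
  simp only [compl_Delta_sdiff_singleton, Set.mem_union, Set.mem_Ico,
    Set.mem_singleton_iff] at hy
  omega

lemma mult_Delta_sdiff_singleton (hm : 0 < m) (hmf : m < f) : mult (Delta m \ {f}) = m := by
  refine IsLeast.csInf_eq ⟨⟨mem_Delta_sdiff_singleton.mpr (by omega), hm.ne'⟩, ?_⟩
  rintro s ⟨hs, hs0⟩
  rw [mem_Delta_sdiff_singleton] at hs
  omega

lemma nonneg_of_mem_PF_Delta_sdiff_singleton (hm : 0 < m) (hmf : m < f) {z : ℤ}
    (hz : z ∈ PF (Delta m \ {f})) : 0 ≤ z := by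
  by_contra! hneg
  have hmS : m ∈ Delta m \ {f} := mem_Delta_sdiff_singleton.mpr (by omega)
  have hmfS : m + f ∈ Delta m \ {f} := mem_Delta_sdiff_singleton.mpr (by omega)
  obtain ⟨k, hk, hkz⟩ := hz.2 m hmS hm.ne'
  obtain ⟨l, hl, hlz⟩ := hz.2 (m + f) hmfS (by omega)
  rw [mem_Delta_sdiff_singleton] at hk hl
  simp only [Nat.cast_add] at hkz hlz
  -- `z + m ∈ S` with `z + m < m` forces `z = -m`, and then `z + (m + f) = f ∉ S`.
  omega

lemma PF_Delta_sdiff_singleton (hm : 0 < m) (hmf : m < f) :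
    PF (Delta m \ {f}) = Nat.cast '' (Set.Ioo (f - m) m ∪ {f}) := by
  ext z
  constructor
  · intro hz
    lift z to ℕ using nonneg_of_mem_PF_Delta_sdiff_singleton hm hmf hz
    obtain ⟨hgap, hPF⟩ := natCast_mem_PF.mp hz
    refine ⟨z, ?_, rfl⟩
    rw [mem_Delta_sdiff_singleton] at hgap
    simp only [Set.mem_union, Set.mem_Ioo, Set.mem_singleton_iff]
    by_contra! hlow
    -- `f - z` is then a nonzero element of `S`, and `z + (f - z) = f` is not.
    have := hPF (f - z) (mem_Delta_sdiff_singleton.mpr (by omega)) (by omega)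
    rw [mem_Delta_sdiff_singleton] at this
    omega
  · rintro ⟨n, hn, rfl⟩
    simp only [Set.mem_union, Set.mem_Ioo, Set.mem_singleton_iff] at hn
    refine natCast_mem_PF.mpr ⟨?_, fun s hs hs0 => ?_⟩
    · rw [mem_Delta_sdiff_singleton]
      omega
    · rw [mem_Delta_sdiff_singleton] at hs ⊢
      omega

lemma rPF_Delta_sdiff_singleton (hm : 0 < m) (hmf : m < f) :
    rPF (Delta m \ {f}) = Nat.cast '' (Set.Ioo (f - m) m ∪ {f}) := by
  ext z
  simp only [rPF, frob_Delta_sdiff_singleton hmf.le, mult_Delta_sdiff_singleton hm hmf,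
    Set.mem_ofPred_eq, Set.mem_image, Set.mem_union, Set.mem_Ioo, Set.mem_singleton_iff]
  constructor
  · rintro ⟨hgap, hlow, hhigh⟩
    lift z to ℕ using by omega
    rw [natCast_mem_ZS, mem_Delta_sdiff_singleton] at hgap
    exact ⟨z, by omega, rfl⟩
  · rintro ⟨n, hn, rfl⟩
    rw [natCast_mem_ZS, mem_Delta_sdiff_singleton]
    omega

lemma typ_Delta_sdiff_singleton (hm : 0 < m) (hmf : m < f) (hf : f < 2 * m) :
    typ (Delta m \ {f}) = 2 * m - f := by
  have hdisj : Disjoint (Set.Ioo (f - m) m) {f} := by simp; omega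
  rw [typ, PF_Delta_sdiff_singleton hm hmf, Set.ncard_image_of_injective _ Nat.cast_injective,
    Set.ncard_union_eq hdisj, Set.ncard_singleton, Set.ncard_Ioo_nat]
  omega

lemma msg_Delta_sdiff_singleton (hm : 0 < m) (hmf : m + 1 < f) :
    msg (Delta m \ {f}) = Set.Ico m (2 * m) \ {f} := by
  ext x
  simp only [msg, Delta, Set.mem_sdiff, Set.mem_union, Set.mem_singleton_iff, Set.mem_ofPred_eq,
    Set.mem_Ico]
  constructor
  · rintro ⟨⟨hx, hx0⟩, hsum⟩
    refine ⟨⟨by omega, ?_⟩, hx.2⟩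
    by_contra! hx2m
    by_cases hxf : x = m + f
    · exact hsum ⟨m + 1, by omega, f - 1, by omega, by omega⟩
    · exact hsum ⟨m, by omega, x - m, by omega, by omega⟩
  · rintro ⟨⟨hmx, hx2m⟩, hxf⟩
    refine ⟨⟨⟨by omega, hxf⟩, by omega⟩, ?_⟩
    rintro ⟨a, ha, b, hb, rfl⟩
    omega

lemma embdim_Delta_sdiff_singleton (hm : 0 < m) (hmf : m + 1 < f) (hf : f < 2 * m) :
    embdim (Delta m \ {f}) = m - 1 := by
  rw [embdim, msg_Delta_sdiff_singleton hm hmf,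
    Set.ncard_sdiff_singleton_of_mem (by simp; omega), Set.ncard_Ico_nat]
  omega

end DeltaSdiffSingleton

theorem stmt13 (t e : ℕ) (ht : 2 ≤ t) (hte : t ≤ e - 1) :
    ∃ S : Set ℕ, IsNumericalSemigroup S ∧
      2 * genus S = frob S + typ S ∧ redtyp S = typ S ∧
      typ S = t ∧ embdim S = e := by
  set m := e + 1 with hm_def
  set f := 2 * m - t with hf_def
  have hm : 0 < m := by omega
  have hmf : m + 1 < f := by omega
  have hf : f < 2 * m := by omega
  refine ⟨Delta m \ {f}, isNumericalSemigroup_Delta_sdiff_singleton (by omega) hf,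
    ?_, ?_, ?_, ?_⟩
  · rw [genus_Delta_sdiff_singleton hm (by omega), frob_Delta_sdiff_singleton (by omega),
      typ_Delta_sdiff_singleton hm (by omega) hf]
    omega
  · rw [redtyp, typ, rPF_Delta_sdiff_singleton hm (by omega),
      PF_Delta_sdiff_singleton hm (by omega)]
  · rw [typ_Delta_sdiff_singleton hm (by omega) hf]
    omega
  · rw [embdim_Delta_sdiff_singleton hm hmf hf]
    omega
end

section
/- Let S ≠ ℕ be a numerical semigroup with second smallest minimal generator n₂. Then the following are equivalent: (1) s(S) = m(S) − 1; (2) S has maximal embedding dimension and maximal reduced type; (3) F(S) + 1 ≤ n₂. -/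
set_option linter.unusedSectionVars false


section Basic
variable {S : Set ℕ} (hNS : IsNumericalSemigroup S) (hS : S ≠ Set.univ)
include hNS hS

lemma ns_zero : (0:ℕ) ∈ S := hNS.1
lemma ns_add : ∀ a ∈ S, ∀ b ∈ S, a + b ∈ S := hNS.2.1

lemma ns_frob_notMem : frob S ∉ S := by
  have h1 : Sᶜ.Nonempty := Set.nonempty_compl.2 hS
  have := Nat.sSup_mem h1 (hNS.2.2.bddAbove)
  exact this

lemma ns_le_frob {x : ℕ} (hx : x ∉ S) : x ≤ frob S :=
  le_csSup (hNS.2.2.bddAbove) hx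

lemma ns_frob_lt_mem {x : ℕ} (hx : frob S < x) : x ∈ S := by
  by_contra h
  exact absurd (ns_le_frob hNS hS h) (not_le.2 hx)

lemma ns_one_notMem : (1:ℕ) ∉ S := by
  intro h1
  apply hS
  ext n
  simp only [Set.mem_univ, iff_true]
  induction n with
  | zero => exact hNS.1
  | succ k ih => exact hNS.2.1 k ih 1 h1

lemma ns_mult_mem : mult S ∈ S ∧ mult S ≠ 0 := by
  have hne : {s ∈ S | s ≠ 0}.Nonempty :=
    ⟨frob S + 1, ns_frob_lt_mem hNS hS (Nat.lt_succ_self _), Nat.succ_ne_zero _⟩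
  exact Nat.sInf_mem hne

lemma ns_mult_min {x : ℕ} (hx : x ∈ S) (hx0 : x ≠ 0) : mult S ≤ x :=
  Nat.sInf_le ⟨hx, hx0⟩

lemma ns_two_le_mult : 2 ≤ mult S := by
  have h := ns_mult_mem hNS hS
  have h3 : mult S ≠ 1 := fun e => ns_one_notMem hNS hS (e ▸ h.1)
  have h4 := h.2
  omega

lemma ns_frob_pos : 1 ≤ frob S := by
  have := ns_frob_notMem hNS hS
  rcases Nat.eq_zero_or_pos (frob S) with h | h
  · rw [h] at this; exact absurd hNS.1 this
  · exact h

lemma ns_mult_le_frob_succ : mult S ≤ frob S + 1 :=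
  ns_mult_min hNS hS (ns_frob_lt_mem hNS hS (Nat.lt_succ_self _)) (Nat.succ_ne_zero _)

lemma ns_mul_mult_mem (k : ℕ) : k * mult S ∈ S := by
  induction k with
  | zero => simpa using hNS.1
  | succ n ih =>
    have := hNS.2.1 _ ih _ (ns_mult_mem hNS hS).1
    simpa [Nat.succ_mul] using this

lemma ns_dvd_mem {x : ℕ} (h : mult S ∣ x) : x ∈ S := by
  obtain ⟨c, rfl⟩ := h
  simpa [mul_comm] using ns_mul_mult_mem hNS hS c

omit hNS hS in
lemma mem_ZS (n : ℕ) : (n : ℤ) ∈ ZS S ↔ n ∈ S := by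
  constructor
  · rintro ⟨a, ha, hae⟩
    have h2 : a = n := by simpa using hae
    exact h2 ▸ ha
  · intro h; exact ⟨n, h, rfl⟩

omit hNS hS in
lemma ZS_nonneg {x : ℤ} (h : x ∈ ZS S) : 0 ≤ x := by
  rcases h with ⟨a, _, rfl⟩; exact Int.natCast_nonneg a

end Basic

section Msg
variable {S : Set ℕ} (hNS : IsNumericalSemigroup S) (hS : S ≠ Set.univ)
include hNS hS

omit hNS hS in
lemma mem_msg_iff {x : ℕ} : x ∈ msg S ↔ x ∈ S ∧ x ≠ 0 ∧
    ¬ ∃ a, (a ∈ S ∧ a ≠ 0) ∧ ∃ b, (b ∈ S ∧ b ≠ 0) ∧ x = a + b := by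
  simp only [msg, Set.mem_diff, Set.mem_singleton_iff, Set.mem_setOf_eq]
  tauto

lemma ns_mult_mem_msg : mult S ∈ msg S := by
  rw [mem_msg_iff]
  refine ⟨(ns_mult_mem hNS hS).1, (ns_mult_mem hNS hS).2, ?_⟩
  rintro ⟨a, ⟨ha, ha0⟩, b, ⟨hb, hb0⟩, he⟩
  have h1 := ns_mult_min hNS hS ha ha0
  have h2 := ns_mult_min hNS hS hb hb0
  omega

lemma ns_msg_split : ∀ x, x ∈ S → x ≠ 0 → ∃ g ∈ msg S, ∃ y ∈ S, x = g + y := by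
  intro x
  induction x using Nat.strong_induction_on with
  | _ x ih =>
    intro hx hx0
    by_cases hm : x ∈ msg S
    · exact ⟨x, hm, 0, hNS.1, by omega⟩
    · rw [mem_msg_iff] at hm
      push_neg at hm
      obtain ⟨a, ⟨ha, ha0⟩, b, ⟨hb, hb0⟩, rfl⟩ := hm hx hx0
      obtain ⟨g, hg, y, hy, rfl⟩ := ih a (by omega) ha ha0
      exact ⟨g, hg, y + b, hNS.2.1 _ hy _ hb, by omega⟩

lemma ns_msg_diff_nonempty : (msg S \ {mult S}).Nonempty := by
  by_contra hne
  rw [Set.not_nonempty_iff_eq_empty, Set.diff_eq_empty] at hne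
  have hall : ∀ x, x ∈ S → mult S ∣ x := by
    intro x
    induction x using Nat.strong_induction_on with
    | _ x ih =>
      intro hx
      rcases Nat.eq_zero_or_pos x with h0 | h0
      · simp [h0]
      · obtain ⟨g, hg, y, hy, rfl⟩ := ns_msg_split hNS hS _ hx (by omega)
        have hgM : g = mult S := hne hg
        have hg0 : g ≠ 0 := ((mem_msg_iff).1 hg).2.1
        have h2 : mult S ∣ y := ih y (by omega) hy
        subst hgM
        exact Nat.dvd_add dvd_rfl h2
  have d1 := hall _ (ns_frob_lt_mem hNS hS (Nat.lt_succ_self _))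
  have d2 : frob S + 2 ∈ S := ns_frob_lt_mem hNS hS (by omega)
  have d3 := hall _ d2
  have := Nat.dvd_sub d3 d1
  have h2 := ns_two_le_mult hNS hS
  have : mult S ∣ 1 := by simpa using this
  have := Nat.le_of_dvd one_pos this
  omega

lemma ns_Q_iff_secondGen :
    (∀ x ∈ S, x ≠ 0 → x ≤ frob S → mult S ∣ x) ↔ frob S + 1 ≤ secondGen S := by
  constructor
  · intro hQ
    have hmem : secondGen S ∈ msg S \ {mult S} :=
      Nat.sInf_mem (ns_msg_diff_nonempty hNS hS)
    obtain ⟨hg, hgM⟩ := hmem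
    simp only [Set.mem_singleton_iff] at hgM
    by_contra hle
    push_neg at hle
    rw [mem_msg_iff] at hg
    obtain ⟨hgS, hg0, hgnd⟩ := hg
    obtain ⟨c, hc⟩ := hQ _ hgS hg0 (by omega)
    have hM2 := ns_two_le_mult hNS hS
    have hc2 : 2 ≤ c := by
      rcases c with _ | c
      · simp at hc; omega
      · rcases c with _ | c
        · simp at hc; omega
        · omega
    obtain ⟨n, rfl⟩ : ∃ n, c = n + 2 := ⟨c - 2, by omega⟩
    exact hgnd ⟨mult S, ⟨(ns_mult_mem hNS hS).1, (ns_mult_mem hNS hS).2⟩,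
      mult S * (n + 1), ⟨ns_dvd_mem hNS hS ⟨n + 1, rfl⟩, by positivity⟩,
      by rw [hc]; ring⟩
  · intro h x
    induction x using Nat.strong_induction_on with
    | _ x ih =>
      intro hx hx0 hxF
      obtain ⟨g, hg, y, hy, rfl⟩ := ns_msg_split hNS hS _ hx hx0
      by_cases hgM : g = mult S
      · rcases Nat.eq_zero_or_pos y with h0 | h0
        · subst h0; exact ⟨1, by omega⟩
        · have hg0 : g ≠ 0 := ((mem_msg_iff).1 hg).2.1
          have h2 : mult S ∣ y := ih y (by omega) hy (by omega) (by omega)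
          subst hgM
          exact Nat.dvd_add dvd_rfl h2
      · have : secondGen S ≤ g := Nat.sInf_le ⟨hg, hgM⟩
        omega
end Msg

open scoped Classical

section Window
variable {S : Set ℕ} (hNS : IsNumericalSemigroup S) (hS : S ≠ Set.univ)
include hNS hS

lemma ns_rPF_eq : rPF S =
    (fun n : ℕ => (n:ℤ)) '' {n : ℕ | frob S + 1 - mult S ≤ n ∧ n ≤ frob S ∧ n ∉ S} := by
  have hmF : mult S ≤ frob S + 1 := ns_mult_le_frob_succ hNS hS
  ext x
  simp only [rPF, Set.mem_setOf_eq, Set.mem_image]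
  constructor
  · rintro ⟨hx1, hx2, hx3⟩
    refine ⟨x.toNat, ⟨by omega, by omega, ?_⟩, by omega⟩
    intro hn
    exact hx1 (by rw [show x = ((x.toNat : ℕ):ℤ) by omega]; exact (mem_ZS _).2 hn)
  · rintro ⟨n, ⟨h1, h2, h3⟩, rfl⟩
    exact ⟨fun h => h3 ((mem_ZS n).1 h), by omega, by omega⟩

lemma ns_redtyp_eq_card :
    redtyp S = ((Finset.Icc (frob S + 1 - mult S) (frob S)).filter (· ∉ S)).card := by
  rw [redtyp, ns_rPF_eq hNS hS]
  rw [Set.ncard_image_of_injective _ (fun a b h => by simpa using h)]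
  have he : {n : ℕ | frob S + 1 - mult S ≤ n ∧ n ≤ frob S ∧ n ∉ S} =
      ↑((Finset.Icc (frob S + 1 - mult S) (frob S)).filter (· ∉ S)) := by
    ext n
    simp [Finset.mem_filter, Finset.mem_Icc, and_assoc]
  rw [he, Set.ncard_coe_finset]

lemma ns_card_window_split :
    ((Finset.Icc (frob S + 1 - mult S) (frob S)).filter (· ∉ S)).card
    + ((Finset.Icc (frob S + 1 - mult S) (frob S)).filter (· ∈ S)).card = mult S := by
  have hmF : mult S ≤ frob S + 1 := ns_mult_le_frob_succ hNS hS
  have h := Finset.card_filter_add_card_filter_not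
    (s := Finset.Icc (frob S + 1 - mult S) (frob S)) (p := (· ∉ S))
  have he : (Finset.Icc (frob S + 1 - mult S) (frob S)).filter (fun a => ¬ a ∉ S)
      = (Finset.Icc (frob S + 1 - mult S) (frob S)).filter (· ∈ S) :=
    Finset.filter_congr (fun x _ => not_not)
  rw [he, Nat.card_Icc] at h
  omega

lemma ns_count_of_Q (hQ : ∀ x ∈ S, x ≠ 0 → x ≤ frob S → mult S ∣ x) :
    ((Finset.Icc (frob S + 1 - mult S) (frob S)).filter (· ∈ S)).card = 1 := by
  have hmF : mult S ≤ frob S + 1 := ns_mult_le_frob_succ hNS hS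
  have hM2 : 2 ≤ mult S := ns_two_le_mult hNS hS
  have hdm := Nat.div_add_mod (frob S) (mult S)
  have hmod : frob S % mult S < mult S := Nat.mod_lt _ (by omega)
  have hc1 : frob S / mult S * mult S = mult S * (frob S / mult S) := mul_comm _ _
  have he : (Finset.Icc (frob S + 1 - mult S) (frob S)).filter (· ∈ S)
      = {frob S / mult S * mult S} := by
    ext x
    simp only [Finset.mem_filter, Finset.mem_Icc, Finset.mem_singleton]
    constructor
    · rintro ⟨⟨h1, h2⟩, h3⟩
      rcases Nat.eq_zero_or_pos x with h0 | h0
      · subst h0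
        have hd0 : frob S / mult S = 0 := Nat.div_eq_of_lt (by omega)
        simp [hd0]
      · obtain ⟨c, hc⟩ := hQ x h3 (by omega) h2
        have hcc : c * mult S = mult S * c := mul_comm _ _
        have hsucc : (c + 1) * mult S = mult S * c + mult S := by ring
        have hcd : frob S / mult S = c := by
          apply Nat.div_eq_of_lt_le
          · omega
          · omega
        rw [hcd]
        omega
    · rintro rfl
      refine ⟨⟨by omega, by omega⟩, ns_dvd_mem hNS hS ⟨frob S / mult S, mul_comm _ _⟩⟩
  rw [he, Finset.card_singleton]

lemma ns_count_of_notQ (hQ : ¬ ∀ x ∈ S, x ≠ 0 → x ≤ frob S → mult S ∣ x) :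
    2 ≤ ((Finset.Icc (frob S + 1 - mult S) (frob S)).filter (· ∈ S)).card := by
  have hmF : mult S ≤ frob S + 1 := ns_mult_le_frob_succ hNS hS
  have hM2 : 2 ≤ mult S := ns_two_le_mult hNS hS
  have hdm := Nat.div_add_mod (frob S) (mult S)
  have hmod : frob S % mult S < mult S := Nat.mod_lt _ (by omega)
  have hc1 : frob S / mult S * mult S = mult S * (frob S / mult S) := mul_comm _ _
  push_neg at hQ
  obtain ⟨x, hxS, hx0, hxF, hxd⟩ := hQ
  have hdm2 := Nat.div_add_mod (frob S - x) (mult S)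
  have hmod2 : (frob S - x) % mult S < mult S := Nat.mod_lt _ (by omega)
  have hk : (frob S - x) / mult S * mult S = mult S * ((frob S - x) / mult S) := mul_comm _ _
  set y := x + (frob S - x) / mult S * mult S with hy
  have hyS : y ∈ S := hNS.2.1 x hxS _ (ns_dvd_mem hNS hS ⟨_, mul_comm _ _⟩)
  have hyd : ¬ mult S ∣ y := by
    intro hd
    apply hxd
    have hxe : x = y - (frob S - x) / mult S * mult S := by omega
    rw [hxe]
    exact Nat.dvd_sub hd ⟨_, mul_comm _ _⟩
  have hyF : y ∈ (Finset.Icc (frob S + 1 - mult S) (frob S)).filter (· ∈ S) := by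
    simp only [Finset.mem_filter, Finset.mem_Icc]
    exact ⟨⟨by omega, by omega⟩, hyS⟩
  have hdF : frob S / mult S * mult S ∈
      (Finset.Icc (frob S + 1 - mult S) (frob S)).filter (· ∈ S) := by
    simp only [Finset.mem_filter, Finset.mem_Icc]
    exact ⟨⟨by omega, by omega⟩, ns_dvd_mem hNS hS ⟨_, mul_comm _ _⟩⟩
  have hne : y ≠ frob S / mult S * mult S := by
    intro he
    exact hyd (he ▸ ⟨_, mul_comm _ _⟩)
  exact Finset.one_lt_card.2 ⟨y, hyF, _, hdF, hne⟩

lemma ns_redtyp_iff_Q :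
    redtyp S = mult S - 1 ↔ (∀ x ∈ S, x ≠ 0 → x ≤ frob S → mult S ∣ x) := by
  have hsplit := ns_card_window_split hNS hS
  have hrt := ns_redtyp_eq_card hNS hS
  have hM2 : 2 ≤ mult S := ns_two_le_mult hNS hS
  constructor
  · intro h
    by_contra hQ
    have := ns_count_of_notQ hNS hS hQ
    omega
  · intro hQ
    have := ns_count_of_Q hNS hS hQ
    omega

end Window

section Embdim
variable {S : Set ℕ} (hNS : IsNumericalSemigroup S) (hS : S ≠ Set.univ)
include hNS hS

lemma ns_msg_not_dvd {g : ℕ} (hg : g ∈ msg S) (hgM : g ≠ mult S) : ¬ mult S ∣ g := by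
  rw [mem_msg_iff] at hg
  obtain ⟨hgS, hg0, hgnd⟩ := hg
  rintro ⟨c, hc⟩
  have hM2 : 2 ≤ mult S := ns_two_le_mult hNS hS
  rcases c with _ | _ | n
  · omega
  · exact hgM (by omega)
  · exact hgnd ⟨mult S, ⟨(ns_mult_mem hNS hS).1, (ns_mult_mem hNS hS).2⟩,
      mult S * (n + 1), ⟨ns_dvd_mem hNS hS ⟨n + 1, rfl⟩, by positivity⟩, by rw [hc]; ring⟩

lemma ns_msg_le_frob_add {g : ℕ} (hg : g ∈ msg S) : g ≤ frob S + mult S := by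
  by_contra hgt
  push_neg at hgt
  rw [mem_msg_iff] at hg
  have hM2 : 2 ≤ mult S := ns_two_le_mult hNS hS
  have h1 : g - mult S ∈ S := ns_frob_lt_mem hNS hS (by omega)
  exact hg.2.2 ⟨mult S, ⟨(ns_mult_mem hNS hS).1, (ns_mult_mem hNS hS).2⟩,
    g - mult S, ⟨h1, by omega⟩, by omega⟩

lemma ns_msg_eq_of_Q (hQ : ∀ x ∈ S, x ≠ 0 → x ≤ frob S → mult S ∣ x) :
    msg S = insert (mult S)
      ↑((Finset.Icc (frob S + 1) (frob S + mult S)).filter (fun x => ¬ mult S ∣ x)) := by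
  have hM2 : 2 ≤ mult S := ns_two_le_mult hNS hS
  have hsg := (ns_Q_iff_secondGen hNS hS).1 hQ
  ext g
  simp only [Set.mem_insert_iff, Finset.coe_filter, Finset.mem_Icc, Set.mem_setOf_eq]
  constructor
  · intro hg
    by_cases hgM : g = mult S
    · exact Or.inl hgM
    · have hgt : frob S + 1 ≤ g := le_trans hsg (Nat.sInf_le ⟨hg, hgM⟩)
      exact Or.inr ⟨⟨hgt, ns_msg_le_frob_add hNS hS hg⟩, ns_msg_not_dvd hNS hS hg hgM⟩
  · rintro (rfl | ⟨⟨h1, h2⟩, h3⟩)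
    · exact ns_mult_mem_msg hNS hS
    · rw [mem_msg_iff]
      have hF1 : 1 ≤ frob S := ns_frob_pos hNS hS
      refine ⟨ns_frob_lt_mem hNS hS (by omega), by omega, ?_⟩
      rintro ⟨a, ⟨ha, ha0⟩, b, ⟨hb, hb0⟩, rfl⟩
      have haM := ns_mult_min hNS hS ha ha0
      have hbM := ns_mult_min hNS hS hb hb0
      have hda : mult S ∣ a := hQ a ha ha0 (by omega)
      have hdb : mult S ∣ b := hQ b hb hb0 (by omega)
      exact h3 (Nat.dvd_add hda hdb)

lemma ns_embdim_of_Q (hQ : ∀ x ∈ S, x ≠ 0 → x ≤ frob S → mult S ∣ x) :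
    embdim S = mult S := by
  have hM2 : 2 ≤ mult S := ns_two_le_mult hNS hS
  have hdm := Nat.div_add_mod (frob S) (mult S)
  have hmod : frob S % mult S < mult S := Nat.mod_lt _ (by omega)
  rw [embdim, ns_msg_eq_of_Q hNS hS hQ]
  rw [← Finset.coe_insert, Set.ncard_coe_finset]
  have hnm : mult S ∉ (Finset.Icc (frob S + 1) (frob S + mult S)).filter
      (fun x => ¬ mult S ∣ x) := by
    simp only [Finset.mem_filter]
    rintro ⟨-, h⟩
    exact h dvd_rfl
  rw [Finset.card_insert_of_notMem hnm]
  have hsplit := Finset.card_filter_add_card_filter_not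
    (s := Finset.Icc (frob S + 1) (frob S + mult S)) (p := fun x => mult S ∣ x)
  have hone : (Finset.Icc (frob S + 1) (frob S + mult S)).filter (fun x => mult S ∣ x)
      = {(frob S / mult S + 1) * mult S} := by
    ext z
    simp only [Finset.mem_filter, Finset.mem_Icc, Finset.mem_singleton]
    constructor
    · rintro ⟨⟨h1, h2⟩, c, hc⟩
      rcases c with _ | d
      · omega
      · have hcc : (d + 1) * mult S = mult S * (d + 1) := mul_comm _ _
        have hcc2 : (d + 1 + 1) * mult S = mult S * (d + 1) + mult S := by ring
        have hd : frob S / mult S = d := by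
          apply Nat.div_eq_of_lt_le
          · have : d * mult S = mult S * (d + 1) - mult S := by ring_nf; omega
            omega
          · omega
        rw [hd]
        omega
    · rintro rfl
      have hcc : (frob S / mult S + 1) * mult S = mult S * (frob S / mult S) + mult S := by
        ring
      exact ⟨⟨by omega, by omega⟩, ⟨frob S / mult S + 1, mul_comm _ _⟩⟩
  rw [hone] at hsplit
  rw [Nat.card_Icc] at hsplit
  simp only [Finset.card_singleton] at hsplit
  omega

end Embdim

section PFsec
variable {S : Set ℕ} (hNS : IsNumericalSemigroup S) (hS : S ≠ Set.univ)
include hNS hS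

lemma ns_rPF_subset_PF : rPF S ⊆ PF S := by
  rintro x ⟨hx1, hx2, hx3⟩
  refine ⟨hx1, ?_⟩
  intro s hs hs0
  have hsM := ns_mult_min hNS hS hs hs0
  rw [show x + (s:ℤ) = (((x + s).toNat : ℕ) : ℤ) by omega]
  exact (mem_ZS _).2 (ns_frob_lt_mem hNS hS (by omega))

lemma ns_PF_subset_Icc : PF S ⊆ Set.Icc (-((frob S : ℤ) + mult S)) (frob S) := by
  rintro x ⟨hx1, hx2⟩
  have hM2 : 2 ≤ mult S := ns_two_le_mult hNS hS
  have hFM : frob S + mult S ∈ S := ns_frob_lt_mem hNS hS (by omega)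
  have h1 := ZS_nonneg (S := S) (hx2 _ hFM (by omega))
  constructor
  · push_cast at h1 ⊢; omega
  · by_contra hgt
    push_neg at hgt
    exact hx1 (by
      rw [show x = ((x.toNat : ℕ) : ℤ) by omega]
      exact (mem_ZS _).2 (ns_frob_lt_mem hNS hS (by omega)))

lemma ns_PF_finite : (PF S).Finite :=
  (Set.finite_Icc _ _).subset (ns_PF_subset_Icc hNS hS)

lemma ns_redtyp_le_typ : redtyp S ≤ typ S :=
  Set.ncard_le_ncard (ns_rPF_subset_PF hNS hS) (ns_PF_finite hNS hS)

lemma ns_PF_eq_of_dvd {x y : ℤ} (hx : x ∈ PF S) (hy : y ∈ PF S)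
    (h : (mult S : ℤ) ∣ y - x) (hle : x ≤ y) : x = y := by
  obtain ⟨k, hk⟩ := h
  rcases eq_or_lt_of_le hle with he | hlt
  · exact he
  · exfalso
    have hM2 : 2 ≤ mult S := ns_two_le_mult hNS hS
    have hk0 : 0 < k := by
      by_contra hk0
      push_neg at hk0
      have : (mult S : ℤ) * k ≤ 0 :=
        mul_nonpos_of_nonneg_of_nonpos (by positivity) hk0
      omega
    have hmem : k.toNat * mult S ∈ S := ns_mul_mult_mem hNS hS _
    have hne : k.toNat * mult S ≠ 0 := by
      have : 0 < k.toNat * mult S := Nat.mul_pos (by omega) (by omega)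
      omega
    have hkk : ((k.toNat : ℕ) : ℤ) = k := Int.toNat_of_nonneg (by omega)
    have := hx.2 _ hmem hne
    rw [show x + ((k.toNat * mult S : ℕ) : ℤ) = y by push_cast [hkk]; linarith [hk]] at this
    exact hy.1 this

lemma ns_PF_not_dvd {x : ℤ} (hx : x ∈ PF S) : ¬ (mult S : ℤ) ∣ x := by
  rintro ⟨k, hk⟩
  have hM2 : 2 ≤ mult S := ns_two_le_mult hNS hS
  rcases lt_trichotomy k 0 with hneg | rfl | hpos
  · have hFM : frob S + mult S ∈ S := ns_frob_lt_mem hNS hS (by omega)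
    set s : ℕ := (-k-1).toNat * mult S + (frob S + mult S) with hsdef
    have hsS : s ∈ S := hNS.2.1 _ (ns_mul_mult_mem hNS hS _) _ hFM
    have hs0 : s ≠ 0 := by
      have : 0 < frob S + mult S := by omega
      omega
    have hkk : (((-k-1).toNat : ℕ) : ℤ) = -k-1 := Int.toNat_of_nonneg (by omega)
    have := hx.2 s hsS hs0
    rw [show x + (s : ℤ) = ((frob S : ℕ) : ℤ) by
      rw [hsdef, hk]; push_cast [hkk]; ring] at this
    exact ns_frob_notMem hNS hS ((mem_ZS _).1 this)
  · exact hx.1 (by rw [show x = ((0:ℕ):ℤ) by omega]; exact (mem_ZS _).2 hNS.1)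
  · apply hx.1
    have hkk : ((k.toNat : ℕ) : ℤ) = k := Int.toNat_of_nonneg (by omega)
    rw [show x = ((k.toNat * mult S : ℕ) : ℤ) by rw [hk]; push_cast [hkk]; ring]
    exact (mem_ZS _).2 (ns_mul_mult_mem hNS hS _)

lemma ns_typ_le : typ S ≤ mult S - 1 := by
  have hM2 : 2 ≤ mult S := ns_two_le_mult hNS hS
  haveI : NeZero (mult S) := ⟨by omega⟩
  have hinj : Set.InjOn (fun x : ℤ => (x : ZMod (mult S))) (PF S) := by
    intro x hx y hy h
    have h' : ((x : ℤ) : ZMod (mult S)) = ((y : ℤ) : ZMod (mult S)) := h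
    have hdvd : (mult S : ℤ) ∣ y - x := by
      have h0 : ((y - x : ℤ) : ZMod (mult S)) = 0 := by push_cast; rw [← h']; ring
      exact (ZMod.intCast_zmod_eq_zero_iff_dvd _ _).1 h0
    rcases le_total x y with hle | hle
    · exact ns_PF_eq_of_dvd hNS hS hx hy hdvd hle
    · exact (ns_PF_eq_of_dvd hNS hS hy hx (dvd_sub_comm.1 hdvd) hle).symm
  have himg : (fun x : ℤ => (x : ZMod (mult S))) '' PF S ⊆
      ({(0 : ZMod (mult S))}ᶜ : Set (ZMod (mult S))) := by
    rintro _ ⟨x, hx, rfl⟩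
    simp only [Set.mem_compl_iff, Set.mem_singleton_iff]
    intro h0
    exact ns_PF_not_dvd hNS hS hx ((ZMod.intCast_zmod_eq_zero_iff_dvd _ _).1 h0)
  calc typ S = ((fun x : ℤ => (x : ZMod (mult S))) '' PF S).ncard :=
        (Set.ncard_image_of_injOn hinj).symm
    _ ≤ Set.ncard (({(0 : ZMod (mult S))}ᶜ : Set (ZMod (mult S)))) :=
        Set.ncard_le_ncard himg (Set.toFinite _)
    _ = mult S - 1 := by
        have h1 : Set.ncard ({(0 : ZMod (mult S))} : Set (ZMod (mult S)))
            + Set.ncard (({(0 : ZMod (mult S))}ᶜ : Set (ZMod (mult S))))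
            = Nat.card (ZMod (mult S)) := Set.ncard_add_ncard_compl _
        rw [Set.ncard_singleton] at h1
        rw [Nat.card_eq_fintype_card, ZMod.card] at h1
        omega

end PFsec
noncomputable def wmin (S : Set ℕ) (r : ℕ) : ℕ := sInf {x | x ∈ S ∧ x % mult S = r}

section MED
variable {S : Set ℕ} (hNS : IsNumericalSemigroup S) (hS : S ≠ Set.univ)
include hNS hS

lemma ns_wmin_spec {r : ℕ} (hr : r < mult S) :
    wmin S r ∈ S ∧ wmin S r % mult S = r := by
  have hne : {x | x ∈ S ∧ x % mult S = r}.Nonempty := by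
    refine ⟨r + (frob S + 1) * mult S, ?_, ?_⟩
    · apply ns_frob_lt_mem hNS hS
      have hM2 := ns_two_le_mult hNS hS
      have h1 : frob S + 1 ≤ (frob S + 1) * mult S := Nat.le_mul_of_pos_right _ (by omega)
      omega
    · rw [Nat.add_mul_mod_self_right, Nat.mod_eq_of_lt hr]
  exact Nat.sInf_mem hne

omit hNS hS in
lemma ns_wmin_le {r x : ℕ} (hx : x ∈ S) (hxr : x % mult S = r) : wmin S r ≤ x :=
  Nat.sInf_le ⟨hx, hxr⟩

lemma ns_wmin_pos {r : ℕ} (hr1 : 1 ≤ r) (hr : r < mult S) : wmin S r ≠ 0 := by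
  intro h
  have := (ns_wmin_spec hNS hS hr).2
  rw [h] at this
  simp at this
  omega

lemma ns_wmin_ge {r : ℕ} (hr1 : 1 ≤ r) (hr : r < mult S) : mult S ≤ wmin S r :=
  ns_mult_min hNS hS (ns_wmin_spec hNS hS hr).1 (ns_wmin_pos hNS hS hr1 hr)

lemma ns_wmin_sub_notMem {r : ℕ} (hr1 : 1 ≤ r) (hr : r < mult S) :
    wmin S r - mult S ∉ S := by
  intro h
  have hM2 := ns_two_le_mult hNS hS
  have hge := ns_wmin_ge hNS hS hr1 hr
  have spec := ns_wmin_spec hNS hS hr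
  have h3 : wmin S r - mult S + mult S = wmin S r := by omega
  have h2 : (wmin S r - mult S) % mult S = r := by
    rw [← Nat.add_mod_right (wmin S r - mult S) (mult S), h3, spec.2]
  have := ns_wmin_le (S := S) h h2
  omega

lemma ns_gap_above {x : ℕ} (hx : x ∈ S) (hx0 : x ≠ 0) (hgap : x - mult S ∉ S) :
    1 ≤ x % mult S ∧ x = wmin S (x % mult S) := by
  have hM2 := ns_two_le_mult hNS hS
  have hxM : mult S ≤ x := ns_mult_min hNS hS hx hx0
  have hmod : x % mult S < mult S := Nat.mod_lt _ (by omega)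
  have hr1 : 1 ≤ x % mult S := by
    rcases Nat.eq_zero_or_pos (x % mult S) with h0 | h0
    · exfalso
      obtain ⟨c, hc⟩ := Nat.dvd_of_mod_eq_zero h0
      rcases c with _ | _ | d
      · omega
      · exact hgap (by rw [show x - mult S = 0 by omega]; exact hNS.1)
      · apply hgap
        have hexp : mult S * (d + 1 + 1) = mult S * (d + 1) + mult S := by ring
        rw [show x - mult S = mult S * (d + 1) by omega]
        exact ns_dvd_mem hNS hS ⟨d + 1, rfl⟩
    · exact h0
  refine ⟨hr1, ?_⟩
  have hle : wmin S (x % mult S) ≤ x := ns_wmin_le hx rfl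
  rcases eq_or_lt_of_le hle with he | hlt
  · exact he.symm
  · exfalso
    have spec := ns_wmin_spec hNS hS hmod
    have hdvd : (x - wmin S (x % mult S)) % mult S = 0 :=
      Nat.sub_mod_eq_zero_of_mod_eq (by rw [spec.2])
    obtain ⟨e, he⟩ := Nat.dvd_of_mod_eq_zero hdvd
    rcases e with _ | f
    · omega
    · apply hgap
      have hexp : mult S * (f + 1) = mult S * f + mult S := by ring
      have hwge := ns_wmin_ge hNS hS hr1 hmod
      rw [show x - mult S = wmin S (x % mult S) + mult S * f by omega]
      exact hNS.2.1 _ spec.1 _ (ns_dvd_mem hNS hS ⟨f, rfl⟩)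

lemma ns_wmin_injOn : Set.InjOn (wmin S) (Set.Icc 1 (mult S - 1)) := by
  have hM2 := ns_two_le_mult hNS hS
  rintro a ⟨ha1, ha2⟩ b ⟨hb1, hb2⟩ h
  have sa := (ns_wmin_spec hNS hS (show a < mult S by omega)).2
  have sb := (ns_wmin_spec hNS hS (show b < mult S by omega)).2
  rw [h] at sa
  omega

lemma ns_wmin_mem_msg_of_MED (hE : embdim S = mult S) {r : ℕ}
    (hr1 : 1 ≤ r) (hr : r < mult S) : wmin S r ∈ msg S := by
  have hM2 := ns_two_le_mult hNS hS
  have hinj := ns_wmin_injOn hNS hS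
  have hAfin : (wmin S '' Set.Icc 1 (mult S - 1)).Finite := (Set.finite_Icc _ _).image _
  have hAcard : (wmin S '' Set.Icc 1 (mult S - 1)).ncard = mult S - 1 := by
    rw [Set.ncard_image_of_injOn hinj, show Set.Icc 1 (mult S - 1)
      = ↑(Finset.Icc 1 (mult S - 1)) from (Finset.coe_Icc _ _).symm,
      Set.ncard_coe_finset, Nat.card_Icc]
    omega
  have hsub : msg S \ {mult S} ⊆ wmin S '' Set.Icc 1 (mult S - 1) := by
    rintro g ⟨hg, hgM⟩
    simp only [Set.mem_singleton_iff] at hgM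
    have hmm := mem_msg_iff.1 hg
    have hgeM : mult S ≤ g := ns_mult_min hNS hS hmm.1 hmm.2.1
    have hgap : g - mult S ∉ S := by
      intro h
      exact hmm.2.2 ⟨mult S, ⟨(ns_mult_mem hNS hS).1, (ns_mult_mem hNS hS).2⟩,
        g - mult S, ⟨h, by omega⟩, by omega⟩
    obtain ⟨hr1', heq⟩ := ns_gap_above hNS hS hmm.1 hmm.2.1 hgap
    have hmod : g % mult S < mult S := Nat.mod_lt _ (by omega)
    exact ⟨g % mult S, ⟨hr1', by omega⟩, heq.symm⟩
  have hmsgfin : (msg S).Finite := by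
    apply (hAfin.insert (mult S)).subset
    intro g hg
    by_cases hgM : g = mult S
    · exact hgM ▸ Set.mem_insert _ _
    · exact Set.mem_insert_iff.2 (Or.inr (hsub ⟨hg, hgM⟩))
  have hdiff_card : (msg S \ {mult S}).ncard = mult S - 1 := by
    have h1 : insert (mult S) (msg S \ {mult S}) = msg S := by
      rw [Set.insert_diff_singleton, Set.insert_eq_of_mem (ns_mult_mem_msg hNS hS)]
    have h2 := Set.ncard_insert_of_notMem (s := msg S \ {mult S}) (a := mult S)
      (by simp) (hmsgfin.subset Set.diff_subset)
    rw [h1] at h2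
    have h3 : (msg S).ncard = mult S := hE
    omega
  have hAeq : msg S \ {mult S} = wmin S '' Set.Icc 1 (mult S - 1) :=
    Set.eq_of_subset_of_ncard_le hsub (by omega) hAfin
  have hmem : wmin S r ∈ wmin S '' Set.Icc 1 (mult S - 1) :=
    ⟨r, ⟨hr1, by omega⟩, rfl⟩
  rw [← hAeq] at hmem
  exact hmem.1

lemma ns_typ_of_MED (hE : embdim S = mult S) : typ S = mult S - 1 := by
  refine le_antisymm (ns_typ_le hNS hS) ?_
  have hM2 := ns_two_le_mult hNS hS
  have hPF : ∀ r ∈ Set.Icc 1 (mult S - 1),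
      (wmin S r : ℤ) - mult S ∈ PF S := by
    rintro r ⟨hr1, hr2⟩
    have hr : r < mult S := by omega
    have spec := ns_wmin_spec hNS hS hr
    have hpos := ns_wmin_pos hNS hS hr1 hr
    have hge := ns_wmin_ge hNS hS hr1 hr
    have hgap := ns_wmin_sub_notMem hNS hS hr1 hr
    constructor
    · rw [show (wmin S r : ℤ) - mult S = ((wmin S r - mult S : ℕ) : ℤ) by push_cast; omega]
      exact fun h => hgap ((mem_ZS _).1 h)
    · intro s hs hs0
      have hxS : wmin S r + s ∈ S := hNS.2.1 _ spec.1 _ hs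
      have hx0 : wmin S r + s ≠ 0 := by omega
      have hmem : wmin S r + s - mult S ∈ S := by
        by_contra hgap2
        obtain ⟨hr1', heq⟩ := ns_gap_above hNS hS hxS hx0 hgap2
        have hlt : (wmin S r + s) % mult S < mult S := Nat.mod_lt _ (by omega)
        have hmsg := ns_wmin_mem_msg_of_MED hNS hS hE hr1' hlt
        rw [← heq] at hmsg
        exact (mem_msg_iff.1 hmsg).2.2 ⟨wmin S r, ⟨spec.1, hpos⟩, s, ⟨hs, hs0⟩, rfl⟩
      rw [show (wmin S r : ℤ) - mult S + (s : ℤ)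
        = ((wmin S r + s - mult S : ℕ) : ℤ) by push_cast; omega]
      exact (mem_ZS _).2 hmem
  have hinjf : Set.InjOn (fun r => (wmin S r : ℤ) - mult S) (Set.Icc 1 (mult S - 1)) := by
    intro a ha b hb h
    apply ns_wmin_injOn hNS hS ha hb
    simp only at h
    omega
  have hcard : ((fun r => (wmin S r : ℤ) - mult S) '' Set.Icc 1 (mult S - 1)).ncard
      = mult S - 1 := by
    rw [Set.ncard_image_of_injOn hinjf, show Set.Icc 1 (mult S - 1)
      = ↑(Finset.Icc 1 (mult S - 1)) from (Finset.coe_Icc _ _).symm,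
      Set.ncard_coe_finset, Nat.card_Icc]
    omega
  calc mult S - 1
      = ((fun r => (wmin S r : ℤ) - mult S) '' Set.Icc 1 (mult S - 1)).ncard := hcard.symm
    _ ≤ typ S := Set.ncard_le_ncard
        (by rintro _ ⟨r, hrm, rfl⟩; exact hPF r hrm) (ns_PF_finite hNS hS)

end MED

theorem stmt17 (S : Set ℕ) (hNS : IsNumericalSemigroup S) (hS : S ≠ Set.univ) :
    (redtyp S = mult S - 1 ↔ (embdim S = mult S ∧ redtyp S = typ S)) ∧
    (redtyp S = mult S - 1 ↔ frob S + 1 ≤ secondGen S) := by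
  have hM2 := ns_two_le_mult hNS hS
  have hQiff := ns_redtyp_iff_Q hNS hS
  have hQ3 := ns_Q_iff_secondGen hNS hS
  constructor
  · constructor
    · intro h1
      have hQ := hQiff.1 h1
      refine ⟨ns_embdim_of_Q hNS hS hQ, ?_⟩
      have hst := ns_redtyp_le_typ hNS hS
      have htm := ns_typ_le hNS hS
      omega
    · rintro ⟨hE, hst⟩
      have ht := ns_typ_of_MED hNS hS hE
      omega
  · rw [hQiff]
    exact hQ3
end

section
/- Let S be a numerical semigroup with m(S) < F(S). Then S is a MED-semigroup with maximal reduced type if and only if S = ⟨m⟩ ∪ {x ∈ ℕ : x ≥ F+1} where m = m(S), F = F(S), 2 ≤ m < F, and m does not divide F. -/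
/-!
A numerical semigroup `S` with multiplicity `m` has maximal embedding dimension exactly when
`x + y - m ∈ S` for all nonzero `x, y ∈ S`: the minimal generators are always among `m` and the
`m - 1` nonzero elements of the Apéry set `Ap(S, m)`, and this closure condition says that no
nonzero Apéry element is a sum of two nonzero elements.

If `S` is MED and some `a ∈ S` below `F` were not a multiple of `m`, the least such `a` has
`a - m ∉ S`, and the closure condition makes `a - m` a pseudo-Frobenius number `≤ F - m`, hence
not reduced, so `s(S) < t(S)`. Conversely, in `S = mℕ ∪ [F + 1, ∞)` a pseudo-Frobenius number
`n` is a positive gap, so `m ∤ n` and `n ≤ F`; then `n + m ∈ S` is not a multiple of `m` either,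
which forces `n + m > F`, i.e. `n` is reduced.
-/

open Set

variable {S : Set ℕ}

theorem natCast_mem_ZS_iff {n : ℕ} : (n : ℤ) ∈ ZS S ↔ n ∈ S := by
  simp [ZS]

theorem natCast_mem_PF_iff {n : ℕ} :
    (n : ℤ) ∈ PF S ↔ n ∉ S ∧ ∀ s ∈ S, s ≠ 0 → n + s ∈ S := by
  simp only [PF, mem_ofPred_eq, ← Nat.cast_add, natCast_mem_ZS_iff]

theorem mult_le {s : ℕ} (hs : s ∈ S) (h0 : s ≠ 0) : mult S ≤ s := Nat.sInf_le ⟨hs, h0⟩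

namespace IsNumericalSemigroup

theorem add_mem (hNS : IsNumericalSemigroup S) {a b : ℕ} (ha : a ∈ S) (hb : b ∈ S) :
    a + b ∈ S :=
  hNS.2.1 a ha b hb

theorem mem_of_frob_lt (hNS : IsNumericalSemigroup S) {n : ℕ} (h : frob S < n) : n ∈ S := by
  by_contra hn
  exact (le_csSup hNS.2.2.bddAbove hn).not_gt h

theorem frob_notMem (hNS : IsNumericalSemigroup S) (hF : 0 < frob S) : frob S ∉ S :=
  Nat.sSup_mem (nonempty_iff_ne_empty.2 fun h => by simp [frob, h] at hF) hNS.2.2.bddAbove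

theorem mult_mem_nonzero (hNS : IsNumericalSemigroup S) : mult S ∈ {s ∈ S | s ≠ 0} :=
  Nat.sInf_mem ⟨frob S + 1, hNS.mem_of_frob_lt (lt_add_one _), by omega⟩

theorem mult_mem (hNS : IsNumericalSemigroup S) : mult S ∈ S := hNS.mult_mem_nonzero.1

theorem mult_pos (hNS : IsNumericalSemigroup S) : 0 < mult S :=
  Nat.pos_of_ne_zero hNS.mult_mem_nonzero.2

theorem mem_of_mult_dvd (hNS : IsNumericalSemigroup S) {x : ℕ} (h : mult S ∣ x) : x ∈ S := by
  obtain ⟨k, rfl⟩ := h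
  induction k with
  | zero => simpa using hNS.1
  | succ k ih => exact hNS.add_mem ih hNS.mult_mem

theorem two_le_mult (hNS : IsNumericalSemigroup S) (hF : 0 < frob S) : 2 ≤ mult S := by
  by_contra! h
  have h1 : mult S = 1 := by have := hNS.mult_pos; omega
  exact hNS.frob_notMem hF (hNS.mem_of_mult_dvd (h1 ▸ one_dvd _))

theorem le_of_mem_Ap (hNS : IsNumericalSemigroup S) {x y : ℕ} (hx : x ∈ S)
    (hy : y ∈ Ap S (mult S)) (hxy : x % mult S = y % mult S) : y ≤ x := by
  by_contra! hlt
  obtain ⟨k, hk⟩ := (Nat.modEq_iff_dvd' hlt.le).mp hxy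
  obtain _ | k := k
  · omega
  refine hy.2 (x + mult S * k) ?_ (hNS.add_mem hx (hNS.mem_of_mult_dvd (dvd_mul_right _ _)))
  rw [Nat.mul_succ] at hk
  omega

theorem bijOn_mod_Ap (hNS : IsNumericalSemigroup S) :
    BijOn (· % mult S) (Ap S (mult S)) (Iio (mult S)) := by
  refine ⟨fun x _ => Nat.mod_lt _ hNS.mult_pos,
    fun x hx y hy hxy => le_antisymm (hNS.le_of_mem_Ap hy.1 hx hxy.symm)
      (hNS.le_of_mem_Ap hx.1 hy hxy), fun r hr => ?_⟩
  have hr : r < mult S := hr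
  -- the least element of `S` in the residue class of `r` lies in the Apéry set
  have hne : {x ∈ S | x % mult S = r}.Nonempty := by
    refine ⟨r + mult S * (frob S + 1), hNS.mem_of_frob_lt ?_, ?_⟩
    · nlinarith [hNS.mult_pos]
    · simp [Nat.mod_eq_of_lt hr]
  obtain ⟨hS, hmod⟩ := Nat.sInf_mem hne
  refine ⟨_, ⟨hS, fun u hu huS => ?_⟩, hmod⟩
  have : sInf {x ∈ S | x % mult S = r} ≤ u := Nat.sInf_le ⟨huS, by rw [← hmod, hu]; simp⟩
  have := hNS.mult_pos
  omega

theorem finite_Ap (hNS : IsNumericalSemigroup S) : (Ap S (mult S)).Finite :=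
  hNS.bijOn_mod_Ap.finite_iff_finite.2 (finite_Iio _)

theorem ncard_Ap (hNS : IsNumericalSemigroup S) : (Ap S (mult S)).ncard = mult S := by
  rw [hNS.bijOn_mod_Ap.ncard_eq, ncard_Iio_nat]


theorem msg_subset_insert_Ap (hNS : IsNumericalSemigroup S) :
    msg S ⊆ insert (mult S) (Ap S (mult S) \ {0}) := by
  rintro g ⟨⟨hgS, hg0⟩, hgsum⟩
  by_cases hAp : g ∈ Ap S (mult S)
  · exact mem_insert_of_mem _ ⟨hAp, hg0⟩
  obtain ⟨u, rfl, huS⟩ : ∃ u, g = u + mult S ∧ u ∈ S := by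
    by_contra! h
    exact hAp ⟨hgS, h⟩
  rcases eq_or_ne u 0 with rfl | hu0
  · simp
  · exact (hgsum ⟨u, ⟨huS, hu0⟩, mult S, ⟨hNS.mult_mem, hNS.mult_pos.ne'⟩, rfl⟩).elim

theorem ncard_insert_Ap (hNS : IsNumericalSemigroup S) :
    (insert (mult S) (Ap S (mult S) \ {0})).ncard = mult S := by
  have h0 : 0 ∈ Ap S (mult S) := ⟨hNS.1, fun u hu _ => by have := hNS.mult_pos; omega⟩
  have hm : mult S ∉ Ap S (mult S) \ {0} := fun h => h.1.2 0 (zero_add _).symm hNS.1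
  rw [ncard_insert_of_notMem hm (hNS.finite_Ap.sdiff), ncard_sdiff_singleton_of_mem h0, hNS.ncard_Ap]
  have := hNS.mult_pos
  omega

theorem embdim_eq_mult_iff (hNS : IsNumericalSemigroup S) :
    embdim S = mult S ↔ ∀ x ∈ S, x ≠ 0 → ∀ y ∈ S, y ≠ 0 → x + y - mult S ∈ S := by
  rw [embdim]
  constructor
  · intro hED x hx hx0 y hy hy0
    have hmsg := eq_of_subset_of_ncard_le hNS.msg_subset_insert_Ap
      (by rw [hNS.ncard_insert_Ap, hED]) (hNS.finite_Ap.sdiff.insert _)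
    have hxy : x + y ∉ Ap S (mult S) := fun hAp =>
      (hmsg ▸ mem_insert_of_mem _ ⟨hAp, show x + y ≠ 0 by omega⟩ : x + y ∈ msg S).2
        ⟨x, ⟨hx, hx0⟩, y, ⟨hy, hy0⟩, rfl⟩
    have := mult_le hx hx0
    by_contra h
    exact hxy ⟨hNS.add_mem hx hy, fun u hu huS => h (by rwa [show x + y - mult S = u by omega])⟩
  · intro hmed
    rw [← hNS.ncard_insert_Ap]
    congr 1
    refine hNS.msg_subset_insert_Ap.antisymm ?_
    rintro g (rfl | ⟨hAp, hg0⟩)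
    · refine ⟨⟨hNS.mult_mem, hNS.mult_pos.ne'⟩, ?_⟩
      rintro ⟨a, ⟨ha, ha0⟩, b, ⟨hb, hb0⟩, hab⟩
      have := mult_le ha ha0
      have := mult_le hb hb0
      have := hNS.mult_pos
      omega
    · refine ⟨⟨hAp.1, hg0⟩, ?_⟩
      rintro ⟨a, ⟨ha, ha0⟩, b, ⟨hb, hb0⟩, rfl⟩
      have := mult_le ha ha0
      exact hAp.2 _ (by omega) (hmed a ha ha0 b hb hb0)

theorem le_frob_of_notMem_ZS (hNS : IsNumericalSemigroup S) {x : ℤ} (hx : x ∉ ZS S) :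
    x ≤ frob S := by
  by_contra! h
  lift x to ℕ using by omega
  exact hx (natCast_mem_ZS_iff.2 (hNS.mem_of_frob_lt (by omega)))

theorem rPF_subset_PF (hNS : IsNumericalSemigroup S) : rPF S ⊆ PF S := by
  rintro x ⟨hx, hlow, -⟩
  refine ⟨hx, fun s hs hs0 => ?_⟩
  have := mult_le hs hs0
  lift x + s to ℕ using by omega with n hn
  exact natCast_mem_ZS_iff.2 (hNS.mem_of_frob_lt (by omega))

theorem finite_PF (hNS : IsNumericalSemigroup S) : (PF S).Finite := by
  refine (finite_Icc (-(mult S : ℤ)) (frob S)).subset fun x hx => ⟨?_, hNS.le_frob_of_notMem_ZS hx.1⟩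
  obtain ⟨n, -, hn : (n : ℤ) = _⟩ := hx.2 (mult S) hNS.mult_mem hNS.mult_pos.ne'
  omega

theorem PF_subset_rPF_of_redtyp_eq_typ (hNS : IsNumericalSemigroup S) (h : redtyp S = typ S) :
    PF S ⊆ rPF S :=
  (eq_of_subset_of_ncard_le hNS.rPF_subset_PF h.ge hNS.finite_PF).ge

theorem pos_of_mem_PF (hNS : IsNumericalSemigroup S) (hF : 0 < frob S) {x : ℤ} (hx : x ∈ PF S) :
    0 < x := by
  obtain ⟨n, hn, hnx : (n : ℤ) = _⟩ := hx.2 (mult S) hNS.mult_mem hNS.mult_pos.ne'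
  rcases eq_or_ne n 0 with rfl | hn0
  · -- `x = -m` is excluded because `x + (F + m) = F`
    have := hx.2 (frob S + mult S) (hNS.mem_of_frob_lt (by have := hNS.mult_pos; omega))
      (by have := hNS.mult_pos; omega)
    rw [show x + ((frob S + mult S : ℕ) : ℤ) = (frob S : ℤ) by push_cast; omega,
      natCast_mem_ZS_iff] at this
    exact absurd this (hNS.frob_notMem hF)
  · have := mult_le hn hn0
    have hx0 : x ≠ 0 := by
      rintro rfl
      exact hx.1 (natCast_mem_ZS_iff.2 hNS.1)
    omega

theorem mult_dvd_of_mem_of_le_frob (hNS : IsNumericalSemigroup S)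
    (hmed : ∀ x ∈ S, x ≠ 0 → ∀ y ∈ S, y ≠ 0 → x + y - mult S ∈ S) (hPF : PF S ⊆ rPF S) :
    ∀ a ∈ S, a ≤ frob S → mult S ∣ a := by
  intro a
  induction a using Nat.strong_induction_on with
  | _ a ih =>
  intro ha haF
  rcases eq_or_ne a 0 with rfl | ha0
  · exact dvd_zero _
  have hma := mult_le ha ha0
  by_cases hsub : a - mult S ∈ S
  · have := Nat.dvd_add (ih (a - mult S) (by have := hNS.mult_pos; omega) hsub (by omega))
      (dvd_refl (mult S))
    rwa [Nat.sub_add_cancel hma] at this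
  · -- otherwise `a - m` would be a pseudo-Frobenius number below `F - m + 1`
    have hPFa : ((a - mult S : ℕ) : ℤ) ∈ PF S := natCast_mem_PF_iff.2 ⟨hsub, fun s hs hs0 => by
      rw [show a - mult S + s = a + s - mult S by omega]
      exact hmed a ha ha0 s hs hs0⟩
    have := (hPF hPFa).2.1
    push_cast [hma] at this
    omega

theorem eq_multiples_union_of_mult_dvd (hNS : IsNumericalSemigroup S)
    (h : ∀ a ∈ S, a ≤ frob S → mult S ∣ a) :
    S = {x | mult S ∣ x} ∪ {x | frob S + 1 ≤ x} := by
  ext x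
  refine ⟨fun hx => ?_, ?_⟩
  · by_cases hxF : x ≤ frob S
    · exact Or.inl (h x hx hxF)
    · exact Or.inr (by simp only [mem_ofPred_eq]; omega)
  · rintro (hx | hx)
    · exact hNS.mem_of_mult_dvd hx
    · exact hNS.mem_of_frob_lt hx

theorem add_sub_mult_mem_of_eq_multiples_union
    (hS : S = {x | mult S ∣ x} ∪ {x | frob S + 1 ≤ x}) :
    ∀ x ∈ S, x ≠ 0 → ∀ y ∈ S, y ≠ 0 → x + y - mult S ∈ S := by
  intro x hx hx0 y hy hy0
  have hmx := mult_le hx hx0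
  have hmy := mult_le hy hy0
  rw [Set.ext_iff] at hS
  rw [hS] at hx hy ⊢
  rcases hx with hx | hx
  · rcases hy with hy | hy
    · left
      rw [Nat.add_sub_assoc hmy]
      exact Nat.dvd_add hx (Nat.dvd_sub hy dvd_rfl)
    · right
      simp only [mem_ofPred_eq] at hy ⊢
      omega
  · right
    simp only [mem_ofPred_eq] at hx ⊢
    omega

theorem PF_subset_rPF_of_eq_multiples_union (hNS : IsNumericalSemigroup S) (hF : 0 < frob S)
    (hS : S = {x | mult S ∣ x} ∪ {x | frob S + 1 ≤ x}) : PF S ⊆ rPF S := by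
  intro x hx
  lift x to ℕ using (hNS.pos_of_mem_PF hF hx).le
  obtain ⟨hn, hnS⟩ := natCast_mem_PF_iff.1 hx
  have hnm := hnS (mult S) hNS.mult_mem hNS.mult_pos.ne'
  rw [Set.ext_iff] at hS
  rw [hS] at hn hnm
  simp only [mem_union, mem_ofPred_eq, not_or, not_le] at hn hnm
  refine ⟨hx.1, ?_, by omega⟩
  rcases hnm with h | h
  · exact absurd ((Nat.dvd_add_left dvd_rfl).1 h) hn.1
  · omega

end IsNumericalSemigroup

theorem stmt18 (S : Set ℕ) (hNS : IsNumericalSemigroup S) (hmF : mult S < frob S) :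
    (embdim S = mult S ∧ redtyp S = typ S) ↔
      (2 ≤ mult S ∧ ¬ mult S ∣ frob S ∧
        S = {x : ℕ | mult S ∣ x} ∪ {x : ℕ | frob S + 1 ≤ x}) := by
  have hF : 0 < frob S := by omega
  rw [hNS.embdim_eq_mult_iff]
  constructor
  · rintro ⟨hmed, hred⟩
    have hdvd := hNS.mult_dvd_of_mem_of_le_frob hmed (hNS.PF_subset_rPF_of_redtyp_eq_typ hred)
    exact ⟨hNS.two_le_mult hF, fun h => hNS.frob_notMem hF (hNS.mem_of_mult_dvd h),
      hNS.eq_multiples_union_of_mult_dvd hdvd⟩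
  · rintro ⟨-, -, hS⟩
    refine ⟨IsNumericalSemigroup.add_sub_mult_mem_of_eq_multiples_union hS, ?_⟩
    rw [redtyp, typ, hNS.rPF_subset_PF.antisymm (hNS.PF_subset_rPF_of_eq_multiples_union hF hS)]
end
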